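/- There is a constant C such that for every w ∈ C²(ℝ_+×ℝ³), every t ≥ 0 and x ∈ ℝ³: ⟨t−r⟩ |Δw(t,x)| ≤ C Σ_{|α|≤1} |∂ Γ^α w(t,x)| + C (t+r) |□w(t,x)|, where Δ is the spatial Laplacian on ℝ³. -/

import Mathlib

open MeasureTheory

noncomputable section

/-- The partial derivative in the `i`-th coordinate direction on `ℝⁿ`. -/
def pd {n : ℕ} (i : Fin n) (u : (Fin n → ℝ) → ℝ) : (Fin n → ℝ) → ℝ :=
  fun z => fderiv ℝ u z (Pi.single i 1)

/-- Iterated application of a family of first-order operators along a list of indices. -/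
def opIter {α γ : Type*} (F : α → γ → γ) : List α → γ → γ
  | [] => id
  | i :: L => fun u => F i (opIter F L u)

/-- The ten vector fields Γ on ℝ×ℝ³ (coordinates: `0 = t`, `1,2,3 = x`):
`∂_t, ∂_{x₁}, ∂_{x₂}, ∂_{x₃}`, the rotations `Ω_{jk} = x_j∂_k - x_k∂_j` (`1 ≤ j < k ≤ 3`)
and the boosts `Ω_{0k} = x_k∂_t + t∂_k` (`k = 1,2,3`). -/
def GammaField (i : Fin 10) (u : (Fin 4 → ℝ) → ℝ) : (Fin 4 → ℝ) → ℝ :=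
  if i.val = 0 then pd 0 u
  else if i.val = 1 then pd 1 u
  else if i.val = 2 then pd 2 u
  else if i.val = 3 then pd 3 u
  else if i.val = 4 then fun z => z 1 * pd 2 u z - z 2 * pd 1 u z
  else if i.val = 5 then fun z => z 1 * pd 3 u z - z 3 * pd 1 u z
  else if i.val = 6 then fun z => z 2 * pd 3 u z - z 3 * pd 2 u z
  else if i.val = 7 then fun z => z 1 * pd 0 u z + z 0 * pd 1 u z
  else if i.val = 8 then fun z => z 2 * pd 0 u z + z 0 * pd 2 u z
  else fun z => z 3 * pd 0 u z + z 0 * pd 3 u z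

/-- The spatial radius `r = |x|` of a space-time point. -/
def rad (z : Fin 4 → ℝ) : ℝ := Real.sqrt ((z 1)^2 + (z 2)^2 + (z 3)^2)

/-- The d'Alembertian `□ = ∂_t² - Δ` on ℝ×ℝ³. -/
def Box (u : (Fin 4 → ℝ) → ℝ) : (Fin 4 → ℝ) → ℝ :=
  fun z => pd 0 (pd 0 u) z - pd 1 (pd 1 u) z - pd 2 (pd 2 u) z - pd 3 (pd 3 u) z

/-- The `L²` norm in `x ∈ ℝ³` at fixed time `t`. -/
def L2x (f : (Fin 4 → ℝ) → ℝ) (t : ℝ) : ℝ :=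
  Real.sqrt (∫ x : Fin 3 → ℝ, (f (Fin.cons t x))^2)

/-- The spatial Laplacian on ℝ×ℝ³ (in the `x` variables). -/
def lap (u : (Fin 4 → ℝ) → ℝ) : (Fin 4 → ℝ) → ℝ :=
  fun z => pd 1 (pd 1 u) z + pd 2 (pd 2 u) z + pd 3 (pd 3 u) z

/-!
With `r = |x|` and the boosts `Ω_{0k} = x_k ∂_t + t ∂_k`, expanding the derivatives of `Ω_{0k} w`
gives the exact identity
`(t² - r²) Δw = Σ_k (t ∂_k Ω_{0k} w - x_k ∂_t Ω_{0k} w + x_k ∂_k w) - 3 t ∂_t w + r² □w`.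
Every term on the right but the last is `t` or `x_k` times a first derivative of `w` or of `Γw`,
so `(t + r) |t - r| |Δw| ≤ 6 (t + r) Σ_{|α|≤1} |∂Γ^α w| + r² |□w|`, and dividing by `t + r` bounds
`|t - r| |Δw|`. Since `∂_k ∂_k w = ∂_k Γw` for the translation `Γ = ∂_k`, also
`|Δw| ≤ 3 Σ_{|α|≤1} |∂Γ^α w|`, which covers the `1` in `⟨t - r⟩ ≤ 1 + |t - r|`.
-/

open Finset

section PartialDerivatives

variable {n : ℕ} {u f g : (Fin n → ℝ) → ℝ} {z : Fin n → ℝ}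

lemma contDiff_pd {k : ℕ} (hu : ContDiff ℝ (k + 1) u) (i : Fin n) : ContDiff ℝ k (pd i u) :=
  (hu.fderiv_right le_rfl).clm_apply contDiff_const

lemma pd_pd_comm (hu : ContDiff ℝ 2 u) (i j : Fin n) (z : Fin n → ℝ) :
    pd i (pd j u) z = pd j (pd i u) z := by
  have hdu : Differentiable ℝ (fderiv ℝ u) := (hu.fderiv_right le_rfl).differentiable one_ne_zero
  have hpd : ∀ a b : Fin n,
      pd a (pd b u) z = fderiv ℝ (fderiv ℝ u) z (Pi.single a 1) (Pi.single b 1) := fun a b => by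
    change fderiv ℝ (fun y => fderiv ℝ u y (Pi.single b 1)) z (Pi.single a 1) = _
    rw [((hdu z).hasFDerivAt.clm_apply (hasFDerivAt_const _ z)).fderiv]
    simp
  rw [hpd, hpd, hu.contDiffAt.isSymmSndFDerivAt (by simp)]

lemma pd_add (hf : DifferentiableAt ℝ f z) (hg : DifferentiableAt ℝ g z) (i : Fin n) :
    pd i (fun y => f y + g y) z = pd i f z + pd i g z := by
  simp only [pd, fderiv_fun_add hf hg, add_apply]

lemma pd_coord_mul (hf : DifferentiableAt ℝ f z) (a i : Fin n) :
    pd i (fun y => y a * f y) z = (Pi.single i 1 : Fin n → ℝ) a * f z + z a * pd i f z := by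
  rw [pd, ((hasFDerivAt_apply a z).fun_mul hf.hasFDerivAt).fderiv]
  simp only [add_apply, smul_apply, smul_eq_mul, ContinuousLinearMap.proj_apply, pd]
  ring

end PartialDerivatives

def boost (k : Fin 4) (u : (Fin 4 → ℝ) → ℝ) : (Fin 4 → ℝ) → ℝ :=
  fun y => y k * pd 0 u y + y 0 * pd k u y

section Boosts

variable {u : (Fin 4 → ℝ) → ℝ}

lemma gammaField_seven : GammaField 7 u = boost 1 u := rfl
lemma gammaField_eight : GammaField 8 u = boost 2 u := rfl
lemma gammaField_nine : GammaField 9 u = boost 3 u := rfl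

lemma pd_boost (hu : ContDiff ℝ 2 u) (i k : Fin 4) (z : Fin 4 → ℝ) :
    pd i (boost k u) z = (Pi.single i 1 : Fin 4 → ℝ) k * pd 0 u z + z k * pd i (pd 0 u) z
      + (Pi.single i 1 : Fin 4 → ℝ) 0 * pd k u z + z 0 * pd i (pd k u) z := by
  have hdiff : ∀ j, DifferentiableAt ℝ (pd j u) z :=
    fun j => ((contDiff_pd hu j).differentiable one_ne_zero).differentiableAt
  rw [show boost k u = fun y => y k * pd 0 u y + y 0 * pd k u y from rfl,
    pd_add ((differentiableAt_apply k z).fun_mul (hdiff 0))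
      ((differentiableAt_apply 0 z).fun_mul (hdiff k)),
    pd_coord_mul (hdiff 0), pd_coord_mul (hdiff k)]
  ring

lemma rad_sq (z : Fin 4 → ℝ) : rad z ^ 2 = z 1 ^ 2 + z 2 ^ 2 + z 3 ^ 2 :=
  Real.sq_sqrt (by positivity)

theorem sq_sub_rad_sq_mul_lap (hu : ContDiff ℝ 2 u) (z : Fin 4 → ℝ) :
    (z 0 ^ 2 - rad z ^ 2) * lap u z =
      z 0 * pd 1 (boost 1 u) z - z 1 * pd 0 (boost 1 u) z + z 1 * pd 1 u z
      + (z 0 * pd 2 (boost 2 u) z - z 2 * pd 0 (boost 2 u) z + z 2 * pd 2 u z)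
      + (z 0 * pd 3 (boost 3 u) z - z 3 * pd 0 (boost 3 u) z + z 3 * pd 3 u z)
      - 3 * z 0 * pd 0 u z + rad z ^ 2 * Box u z := by
  simp only [pd_boost hu, Pi.single_apply, rad_sq, lap, Box, pd_pd_comm hu 0]
  simp only [Fin.isValue, ↓reduceIte, Fin.reduceEq, one_ne_zero, zero_ne_one, one_mul, zero_mul,
    add_zero, zero_add]
  ring

end Boosts

def gammaNorm (u : (Fin 4 → ℝ) → ℝ) (z : Fin 4 → ℝ) : ℝ :=
  ∑ n ∈ range 2, ∑ σ : Fin n → Fin 10, ∑ i : Fin 4,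
    |pd i (opIter GammaField (List.ofFn σ) u) z|

section GammaNorm

variable (u : (Fin 4 → ℝ) → ℝ) (z : Fin 4 → ℝ)

lemma gammaNorm_eq : gammaNorm u z =
    ∑ i : Fin 4, |pd i u z| + ∑ k : Fin 10, ∑ i : Fin 4, |pd i (GammaField k u) z| := by
  simp only [gammaNorm, sum_range_succ, range_one, sum_singleton, univ_unique, List.ofFn_zero,
    opIter, id_eq, sum_const, card_singleton, one_smul, List.ofFn_succ, add_right_inj]
  exact Fintype.sum_equiv (Equiv.funUnique (Fin 1) (Fin 10)) _ _ fun _ => rfl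

lemma abs_pd_le_gammaNorm (i : Fin 4) : |pd i u z| ≤ gammaNorm u z := by
  rw [gammaNorm_eq]
  exact (single_le_sum (fun j _ => abs_nonneg (pd j u z)) (mem_univ i)).trans
    (le_add_of_nonneg_right (by positivity))

lemma abs_pd_gammaField_le_gammaNorm (k : Fin 10) (i : Fin 4) :
    |pd i (GammaField k u) z| ≤ gammaNorm u z := by
  rw [gammaNorm_eq]
  refine le_add_of_nonneg_of_le (by positivity) ?_
  exact (single_le_sum (fun j _ => abs_nonneg (pd j (GammaField k u) z)) (mem_univ i)).trans
    (single_le_sum (f := fun k => ∑ i : Fin 4, |pd i (GammaField k u) z|)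
      (fun _ _ => by positivity) (mem_univ k))

lemma abs_lap_le_gammaNorm : |lap u z| ≤ 3 * gammaNorm u z := by
  have h1 : |pd 1 (pd 1 u) z| ≤ _ := abs_pd_gammaField_le_gammaNorm u z 1 1
  have h2 : |pd 2 (pd 2 u) z| ≤ _ := abs_pd_gammaField_le_gammaNorm u z 2 2
  have h3 : |pd 3 (pd 3 u) z| ≤ _ := abs_pd_gammaField_le_gammaNorm u z 3 3
  calc |lap u z| ≤ |pd 1 (pd 1 u) z| + |pd 2 (pd 2 u) z| + |pd 3 (pd 3 u) z| :=
        abs_add_three _ _ _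
    _ ≤ 3 * gammaNorm u z := by linarith

end GammaNorm

lemma abs_le_rad (z : Fin 4 → ℝ) {k : Fin 4} (hk : k ≠ 0) : |z k| ≤ rad z := by
  rw [← Real.sqrt_sq_eq_abs, rad]
  apply Real.sqrt_le_sqrt
  fin_cases k
  · exact absurd rfl hk
  all_goals
    simp only [Fin.mk_one, Fin.reduceFinMk]
    nlinarith [sq_nonneg (z 1), sq_nonneg (z 2), sq_nonneg (z 3)]

section Estimate

variable {u : (Fin 4 → ℝ) → ℝ} (hu : ContDiff ℝ 2 u) {z : Fin 4 → ℝ} (hz : 0 ≤ z 0)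
include hu hz

lemma abs_sq_sub_rad_sq_mul_lap_le :
    |(z 0 ^ 2 - rad z ^ 2) * lap u z| ≤
      6 * (z 0 + rad z) * gammaNorm u z + rad z ^ 2 * |Box u z| := by
  set S := gammaNorm u z
  have hmul : ∀ {a b c : ℝ}, |a| ≤ c → |b| ≤ S → -(c * S) ≤ a * b ∧ a * b ≤ c * S :=
    fun ha hb => abs_le.mp <|
      (abs_mul _ _).trans_le (mul_le_mul ha hb (abs_nonneg _) ((abs_nonneg _).trans ha))
  have ht : |z 0| ≤ z 0 := (abs_of_nonneg hz).le
  have hx1 := abs_le_rad z (k := 1) (by decide)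
  have hx2 := abs_le_rad z (k := 2) (by decide)
  have hx3 := abs_le_rad z (k := 3) (by decide)
  have hB : |rad z ^ 2 * Box u z| = rad z ^ 2 * |Box u z| := by
    rw [abs_mul, abs_of_nonneg (sq_nonneg _)]
  have hΓ := abs_pd_gammaField_le_gammaNorm u z
  have hd := abs_pd_le_gammaNorm u z
  rw [sq_sub_rad_sq_mul_lap hu, ← gammaField_seven, ← gammaField_eight, ← gammaField_nine, abs_le]
  constructor <;> linarith [abs_le.mp hB.le, hmul ht (hΓ 7 1), hmul ht (hΓ 8 2), hmul ht (hΓ 9 3),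
    hmul hx1 (hΓ 7 0), hmul hx2 (hΓ 8 0), hmul hx3 (hΓ 9 0),
    hmul ht (hd 0), hmul hx1 (hd 1), hmul hx2 (hd 2), hmul hx3 (hd 3)]

lemma abs_sub_rad_mul_abs_lap_le :
    |z 0 - rad z| * |lap u z| ≤ 6 * gammaNorm u z + (z 0 + rad z) * |Box u z| := by
  have hr : 0 ≤ rad z := Real.sqrt_nonneg _
  have hS : 0 ≤ gammaNorm u z := (abs_nonneg _).trans (abs_pd_le_gammaNorm u z 0)
  rcases (add_nonneg hz hr).eq_or_lt with hzero | hpos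
  · rw [show z 0 - rad z = 0 by linarith, ← hzero]
    simpa using hS
  refine le_of_mul_le_mul_left ?_ hpos
  have hr2 : rad z ^ 2 * |Box u z| ≤ (z 0 + rad z) ^ 2 * |Box u z| :=
    mul_le_mul_of_nonneg_right (by nlinarith) (abs_nonneg _)
  calc (z 0 + rad z) * (|z 0 - rad z| * |lap u z|)
      = |(z 0 ^ 2 - rad z ^ 2) * lap u z| := by
        rw [abs_mul, sq_sub_sq, abs_mul, abs_of_pos hpos, mul_assoc]
    _ ≤ 6 * (z 0 + rad z) * gammaNorm u z + rad z ^ 2 * |Box u z| :=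
        abs_sq_sub_rad_sq_mul_lap_le hu hz
    _ ≤ (z 0 + rad z) * (6 * gammaNorm u z + (z 0 + rad z) * |Box u z|) := by linarith

theorem sqrt_one_add_sq_mul_abs_lap_le :
    √(1 + (z 0 - rad z) ^ 2) * |lap u z| ≤
      9 * gammaNorm u z + 9 * (z 0 + rad z) * |Box u z| := by
  have hbracket : √(1 + (z 0 - rad z) ^ 2) ≤ 1 + |z 0 - rad z| :=
    Real.sqrt_le_iff.mpr
      ⟨by positivity, by nlinarith [abs_nonneg (z 0 - rad z), sq_abs (z 0 - rad z)]⟩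
  have hBox : 0 ≤ (z 0 + rad z) * |Box u z| :=
    mul_nonneg (add_nonneg hz (Real.sqrt_nonneg _)) (abs_nonneg _)
  calc √(1 + (z 0 - rad z) ^ 2) * |lap u z| ≤ (1 + |z 0 - rad z|) * |lap u z| :=
        mul_le_mul_of_nonneg_right hbracket (abs_nonneg _)
    _ = |lap u z| + |z 0 - rad z| * |lap u z| := by ring
    _ ≤ 3 * gammaNorm u z + (6 * gammaNorm u z + (z 0 + rad z) * |Box u z|) :=
        add_le_add (abs_lap_le_gammaNorm u z) (abs_sub_rad_mul_abs_lap_le hu hz)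
    _ ≤ 9 * gammaNorm u z + 9 * (z 0 + rad z) * |Box u z| := by linarith

end Estimate

/-- Klainerman–Sideris type pointwise estimate: there is a constant `C` such
that for every `w ∈ C²(ℝ₊×ℝ³)`, every `t ≥ 0` and `x ∈ ℝ³`,
`⟨t-r⟩ |Δw(t,x)| ≤ C Σ_{|α|≤1} |∂Γ^α w(t,x)| + C (t+r)|□w(t,x)|`. -/
theorem stmt5 :
    ∃ C : ℝ, 0 < C ∧
      ∀ w : (Fin 4 → ℝ) → ℝ, ContDiff ℝ 2 w →
        ∀ t : ℝ, 0 ≤ t → ∀ x : Fin 3 → ℝ,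
          Real.sqrt (1 + (t - Real.sqrt ((x 0)^2 + (x 1)^2 + (x 2)^2))^2) *
              |lap w (Fin.cons t x)| ≤
            C * (∑ n ∈ Finset.range 2, ∑ σ : Fin n → Fin 10, ∑ i : Fin 4,
                  |pd i (opIter GammaField (List.ofFn σ) w) (Fin.cons t x)|) +
            C * (t + Real.sqrt ((x 0)^2 + (x 1)^2 + (x 2)^2)) * |Box w (Fin.cons t x)| :=
  ⟨9, by norm_num, fun _ hw t ht x => sqrt_one_add_sq_mul_abs_lap_le (z := Fin.cons t x) hw ht⟩
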